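/- Let τ be a geometric simplex in ℝ^s (the convex hull of affinely independent points) and let f be an affine involution of ℝ^s preserving τ. If f has only isolated fixed points in τ, then τ is a point or a line segment (i.e., τ has dimension at most 1). -/
import Mathlib

open Finset

lemma mem_convexHull_range_fintype {ι E : Type*} [Fintype ι] [AddCommGroup E] [Module ℝ E]
    {v : ι → E} {x : E} (hx : x ∈ convexHull ℝ (Set.range v)) :
    ∃ w : ι → ℝ, (∀ i, 0 ≤ w i) ∧ ∑ i, w i = 1 ∧ Finset.univ.affineCombination ℝ v w = x := by
  classical
  rw [convexHull_range_eq_exists_affineCombination] at hx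
  obtain ⟨t, w, hw0, hw1, hwx⟩ := hx
  refine ⟨(t : Set ι).indicator w, fun i => Set.indicator_apply_nonneg (fun h => hw0 i h), ?_, ?_⟩
  · rw [← hw1]
    simp only [Set.indicator_apply, Finset.mem_coe]
    rw [Fintype.sum_extend_by_zero t w]
  · rw [← Finset.affineCombination_indicator_subset w v t.subset_univ, hwx]

/-- If `τ` is a geometric `d`-simplex in `ℝ^s` (the convex hull of `d+1` affinely
independent points) preserved by an affine involution `f` of `ℝ^s` all of whose fixed
points in `τ` are isolated, then `d ≤ 1`, i.e. `τ` is a point or a segment. -/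
theorem simplex_involution_isolated_fixed_points (s d : ℕ)
    (p : Fin (d + 1) → (Fin s → ℝ)) (hp : AffineIndependent ℝ p)
    (f : (Fin s → ℝ) →ᵃ[ℝ] (Fin s → ℝ)) (hinv : ∀ x, f (f x) = x)
    (τ : Set (Fin s → ℝ)) (hτ : τ = convexHull ℝ (Set.range p))
    (hpres : f '' τ = τ)
    (hiso : ∀ x ∈ τ, f x = x →
      ∃ U : Set (Fin s → ℝ), IsOpen U ∧ x ∈ U ∧
        ∀ y ∈ U ∩ τ, f y = y → y = x) :
    d ≤ 1 := by
  classical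
  by_contra hd
  push_neg at hd
  have hτconv : Convex ℝ τ := hτ ▸ convex_convexHull ℝ _
  have hpmem : ∀ i, p i ∈ τ := fun i => hτ ▸ subset_convexHull ℝ _ ⟨i, rfl⟩
  have hfmem : ∀ y ∈ τ, f y ∈ τ := fun y hy => hpres ▸ ⟨y, hy, rfl⟩
  set x : Fin s → ℝ := midpoint ℝ (p 0) (f (p 0)) with hxdef
  have hxτ : x ∈ τ := hτconv.segment_subset (hpmem 0) (hfmem _ (hpmem 0))
    (midpoint_mem_segment _ _)
  have hfx : f x = x := by
    rw [hxdef, AffineMap.map_midpoint, hinv, midpoint_comm]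
  -- every fixed point of f in τ equals x
  have huniq : ∀ y ∈ τ, f y = y → y = x := by
    intro y hy hfy
    by_contra hne
    obtain ⟨U, hU, hxU, hUx⟩ := hiso x hxτ hfx
    have hcont : Continuous fun t : ℝ => AffineMap.lineMap x y t :=
      AffineMap.lineMap_continuous
    have h0 : (0 : ℝ) ∈ (fun t : ℝ => AffineMap.lineMap x y t) ⁻¹' U := by
      simp [AffineMap.lineMap_apply_zero, hxU]
    obtain ⟨ε, hε, hball⟩ := Metric.isOpen_iff.mp (hU.preimage hcont) 0 h0
    set t : ℝ := min (ε / 2) 1 with htdef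
    have ht0 : 0 < t := lt_min (by linarith) one_pos
    have ht1 : t ≤ 1 := min_le_right _ _
    have htball : t ∈ Metric.ball (0 : ℝ) ε := by
      rw [Metric.mem_ball, Real.dist_eq, sub_zero, abs_of_pos ht0]
      exact lt_of_le_of_lt (min_le_left _ _) (by linarith)
    have hzU : AffineMap.lineMap x y t ∈ U := hball htball
    have hzτ : AffineMap.lineMap x y t ∈ τ := by
      have : AffineMap.lineMap x y t ∈ segment ℝ x y := by
        rw [segment_eq_image_lineMap]
        exact ⟨t, ⟨ht0.le, ht1⟩, rfl⟩
      exact hτconv.segment_subset hxτ hy this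
    have hfz : f (AffineMap.lineMap x y t) = AffineMap.lineMap x y t := by
      rw [AffineMap.apply_lineMap, hfx, hfy]
    have := hUx _ ⟨hzU, hzτ⟩ hfz
    rw [AffineMap.lineMap_apply_module] at this
    apply hne
    have h' : t • (y - x) = 0 := by linear_combination (norm := module) this
    rcases smul_eq_zero.mp h' with h | h
    · exact absurd h ht0.ne'
    · exact sub_eq_zero.mp h
  -- hence f y = 2x - y for all y in τ
  have hrefl : ∀ y ∈ τ, f y = (2 : ℝ) • x - y := by
    intro y hy
    have hm : midpoint ℝ y (f y) ∈ τ :=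
      hτconv.segment_subset hy (hfmem y hy) (midpoint_mem_segment _ _)
    have hfm : f (midpoint ℝ y (f y)) = midpoint ℝ y (f y) := by
      rw [AffineMap.map_midpoint, hinv, midpoint_comm]
    have := huniq _ hm hfm
    have h2 : y + f y = (2 : ℝ) • x := by
      have := congrArg (fun z => (2 : ℝ) • z) this
      simpa [midpoint_eq_smul_add, smul_smul] using this
    exact eq_sub_of_add_eq' h2
  -- barycentric coordinates
  rw [hτ] at hxτ
  obtain ⟨w, hw0, hw1, hwx⟩ := mem_convexHull_range_fintype hxτ
  have hxeq : x = ∑ j, w j • p j := by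
    rw [← hwx, Finset.univ.affineCombination_eq_linear_combination p w hw1]
  have key : ∀ i, 0 ≤ 2 * w i - 1 := by
    intro i
    have hmem : f (p i) ∈ convexHull ℝ (Set.range p) := hτ ▸ hfmem _ (hpmem i)
    obtain ⟨v, hv0, hv1, hvx⟩ := mem_convexHull_range_fintype hmem
    have hfi : f (p i) = (2 : ℝ) • x - p i := hrefl _ (hpmem i)
    set u : Fin (d + 1) → ℝ := fun j => 2 * w j - if j = i then 1 else 0 with hu
    have hu1 : ∑ j, u j = 1 := by
      simp only [hu, Finset.sum_sub_distrib, ← Finset.mul_sum, hw1,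
        Finset.sum_ite_eq', Finset.mem_univ, if_true]
      ring
    have hueq : Finset.univ.affineCombination ℝ p u = f (p i) := by
      rw [Finset.univ.affineCombination_eq_linear_combination p u hu1, hfi, hxeq,
        Finset.smul_sum]
      simp only [hu, sub_smul, ite_smul, one_smul, zero_smul, Finset.sum_sub_distrib,
        Finset.sum_ite_eq', Finset.mem_univ, if_true, smul_smul]
    have hvu := (affineIndependent_iff_eq_of_fintype_affineCombination_eq ℝ p).mp hp
      v u hv1 hu1 (by rw [hvx, hueq])
    have hi := congrFun hvu i
    simp only [hu, eq_self_iff_true, if_true] at hi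
    linarith [hv0 i]
  have hsum : ((d : ℝ) + 1) * (1 / 2) ≤ 1 := by
    have h := Finset.sum_le_sum (s := Finset.univ) (f := fun _ : Fin (d + 1) => (1 / 2 : ℝ))
      (g := w) (fun i _ => by linarith [key i])
    rw [Finset.sum_const, Finset.card_univ, Fintype.card_fin, hw1, nsmul_eq_mul] at h
    push_cast at h
    linarith
  have h2le : (2 : ℝ) ≤ (d : ℝ) := by exact_mod_cast hd
  linarith
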